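/- Let u : (−∞, −1) ∪ (1, ∞) → [0, ∞) be a convex function on each component with u(x) = 0 for |x| ≥ 2 and u(x) → ∞ as |x| → 1. Then the region Ω = {(x, y) : x ∈ dom(u), y ≤ u(x)} ∪ ([−1, 1] × ℝ) in the plane is star-shaped with respect to the point p* = (0, −δ) for any sufficiently large δ > 0. -/

import Mathlib

/-- On the right component, `u` is nonincreasing. -/
lemma mono_right_aux (u : ℝ → ℝ) (hpos : ∀ x, x < -1 ∨ 1 < x → 0 ≤ u x)
    (hconv : ConvexOn ℝ (Set.Ioi (1 : ℝ)) u)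
    (hzero : ∀ x : ℝ, 2 ≤ |x| → u x = 0) :
    ∀ s x : ℝ, 1 < s → s ≤ x → u x ≤ u s := by
  intro s x hs hsx
  rcases eq_or_lt_of_le hsx with rfl | hlt
  · exact le_rfl
  set w := x + 2 with hw
  have hws : (0:ℝ) < w - s := by simp only [hw]; linarith
  have huw : u w = 0 := hzero w (by rw [abs_of_nonneg (by simp only [hw]; linarith)]; simp only [hw]; linarith)
  have ha : (0:ℝ) ≤ (w - x)/(w - s) := by
    apply div_nonneg <;> [simp only [hw]; skip] <;> linarith
  have hb : (0:ℝ) ≤ (x - s)/(w - s) := by apply div_nonneg <;> linarith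
  have hab : (w - x)/(w - s) + (x - s)/(w - s) = 1 := by
    field_simp
    ring
  have key := hconv.2 (Set.mem_Ioi.mpr hs)
    (Set.mem_Ioi.mpr (by simp only [hw]; linarith : (1:ℝ) < w)) ha hb hab
  have hcomb : ((w - x)/(w - s)) • s + ((x - s)/(w - s)) • w = x := by
    simp only [smul_eq_mul]
    field_simp
    ring
  rw [hcomb, huw] at key
  simp only [smul_eq_mul, mul_zero, add_zero] at key
  have hus : 0 ≤ u s := hpos s (Or.inr hs)
  have hale : (w - x)/(w - s) ≤ 1 := by
    rw [div_le_one hws]; simp only [hw]; linarith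
  calc u x ≤ ((w - x)/(w - s)) * u s := key
    _ ≤ 1 * u s := by apply mul_le_mul_of_nonneg_right hale hus
    _ = u s := one_mul _

/-- On the left component, `u` is nondecreasing. -/
lemma mono_left_aux (u : ℝ → ℝ) (hpos : ∀ x, x < -1 ∨ 1 < x → 0 ≤ u x)
    (hconv : ConvexOn ℝ (Set.Iio (-1 : ℝ)) u)
    (hzero : ∀ x : ℝ, 2 ≤ |x| → u x = 0) :
    ∀ s x : ℝ, s < -1 → x ≤ s → u x ≤ u s := by
  intro s x hs hxs
  rcases eq_or_lt_of_le hxs with rfl | hlt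
  · exact le_rfl
  set w := x - 2 with hw
  have hws : (0:ℝ) < s - w := by simp only [hw]; linarith
  have huw : u w = 0 := hzero w (by
    rw [abs_of_nonpos (by simp only [hw]; linarith)]; simp only [hw]; linarith)
  have ha : (0:ℝ) ≤ (s - x)/(s - w) := by apply div_nonneg <;> linarith
  have hb : (0:ℝ) ≤ (x - w)/(s - w) := by
    apply div_nonneg <;> [simp only [hw]; skip] <;> linarith
  have hab : (s - x)/(s - w) + (x - w)/(s - w) = 1 := by
    field_simp
    ring
  have key := hconv.2 (Set.mem_Iio.mpr (by simp only [hw]; linarith : w < (-1:ℝ)))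
    (Set.mem_Iio.mpr hs) ha hb hab
  have hcomb : ((s - x)/(s - w)) • w + ((x - w)/(s - w)) • s = x := by
    simp only [smul_eq_mul]
    field_simp
    ring
  rw [hcomb, huw] at key
  simp only [smul_eq_mul, mul_zero, zero_add] at key
  have hus : 0 ≤ u s := hpos s (Or.inl hs)
  have hble : (x - w)/(s - w) ≤ 1 := by
    rw [div_le_one hws]; simp only [hw]; linarith
  calc u x ≤ ((x - w)/(s - w)) * u s := key
    _ ≤ 1 * u s := by apply mul_le_mul_of_nonneg_right hble hus
    _ = u s := one_mul _

/-- The skillet region `Ω = {(x,y) : x ∈ dom u, y ≤ u x} ∪ ([-1,1] × ℝ)`,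
where `u` is convex on each component of `(−∞,−1) ∪ (1,∞)`, vanishes for
`|x| ≥ 2`, and blows up as `|x| → 1`, is star-shaped with respect to
`p* = (0, −δ)` for every sufficiently large `δ > 0`. -/
theorem stmt_14 (u : ℝ → ℝ) (hpos : ∀ x, x < -1 ∨ 1 < x → 0 ≤ u x)
    (hconv₁ : ConvexOn ℝ (Set.Iio (-1 : ℝ)) u)
    (hconv₂ : ConvexOn ℝ (Set.Ioi (1 : ℝ)) u)
    (hzero : ∀ x : ℝ, 2 ≤ |x| → u x = 0)
    (hblow₁ : Filter.Tendsto u (nhdsWithin (-1) (Set.Iio (-1 : ℝ))) Filter.atTop)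
    (hblow₂ : Filter.Tendsto u (nhdsWithin 1 (Set.Ioi (1 : ℝ))) Filter.atTop)
    (Ω : Set (ℝ × ℝ))
    (hΩ : Ω = {p : ℝ × ℝ | (p.1 < -1 ∨ 1 < p.1) ∧ p.2 ≤ u p.1} ∪
      Set.Icc (-1 : ℝ) 1 ×ˢ (Set.univ : Set ℝ)) :
    ∃ δ₀ > (0 : ℝ), ∀ δ ≥ δ₀, StarConvex ℝ ((0, -δ) : ℝ × ℝ) Ω := by
  refine ⟨1, one_pos, fun δ hδ => ?_⟩
  have hδ0 : (0:ℝ) < δ := lt_of_lt_of_le one_pos hδ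
  intro q hq a b ha hb hab
  -- the point on the segment
  have hpt : a • ((0, -δ) : ℝ × ℝ) + b • q = (b * q.1, a * (-δ) + b * q.2) := by
    simp [Prod.ext_iff, Prod.smul_def, smul_eq_mul]
  rw [hpt]
  have hb1 : b ≤ 1 := by linarith
  rw [hΩ] at hq ⊢
  -- First: if the new x-coordinate lies in [-1,1], we are in the strip.
  by_cases hstrip : -1 ≤ b * q.1 ∧ b * q.1 ≤ 1
  · exact Or.inr ⟨⟨hstrip.1, hstrip.2⟩, Set.mem_univ _⟩
  push_neg at hstrip
  have hout : b * q.1 < -1 ∨ 1 < b * q.1 := by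
    by_cases h1 : -1 ≤ b * q.1
    · exact Or.inr (hstrip h1)
    · exact Or.inl (lt_of_not_ge h1)
  -- q cannot be in the strip
  have hqgraph : (q.1 < -1 ∨ 1 < q.1) ∧ q.2 ≤ u q.1 := by
    rcases hq with h | h
    · exact h
    · exfalso
      have h1 : -1 ≤ q.1 := h.1.1
      have h2 : q.1 ≤ 1 := h.1.2
      rcases hout with h3 | h3
      · nlinarith
      · nlinarith
  left
  refine ⟨hout, ?_⟩
  show a * (-δ) + b * q.2 ≤ u (b * q.1)
  have haδ : a * (-δ) ≤ 0 := by nlinarith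
  by_cases hy : q.2 ≤ 0
  · -- then the second coordinate is ≤ 0 ≤ u (b * q.1)
    have h0 : 0 ≤ u (b * q.1) := hpos _ hout
    nlinarith
  push_neg at hy
  have hbq : b * q.2 ≤ q.2 := by nlinarith
  -- now use monotonicity on the appropriate component
  rcases hout with h3 | h3
  · -- left side: b * q.1 < -1, and q.1 ≤ b * q.1
    have hq1 : q.1 < -1 := by
      rcases hqgraph.1 with h | h
      · exact h
      · exfalso; nlinarith
    have hle : q.1 ≤ b * q.1 := by nlinarith
    have := mono_left_aux u hpos hconv₁ hzero (b * q.1) q.1 h3 hle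
    calc a * (-δ) + b * q.2 ≤ q.2 := by linarith
      _ ≤ u q.1 := hqgraph.2
      _ ≤ u (b * q.1) := this
  · -- right side: 1 < b * q.1 ≤ q.1
    have hq1 : 1 < q.1 := by
      rcases hqgraph.1 with h | h
      · exfalso; nlinarith
      · exact h
    have hle : b * q.1 ≤ q.1 := by nlinarith
    have := mono_right_aux u hpos hconv₂ hzero (b * q.1) q.1 h3 hle
    calc a * (-δ) + b * q.2 ≤ q.2 := by linarith
      _ ≤ u q.1 := hqgraph.2
      _ ≤ u (b * q.1) := this
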